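/- Let p_β be the marginal density of β where β|ψ ~ N(0,ψ) and ψ ~ Gamma(λ, 1/(2γ²)) with 0 < λ ≤ 1/2. Then p_β(β) → ∞ as β → 0, i.e., the Normal-Gamma prior with shape λ ≤ 1/2 is unbounded at the origin. -/

import Mathlib

/-!
On the range `β² ≤ ψ ≤ 1` the normal factor is at least `e^{-1/2} (2πψ)^{-1/2}` and the gamma
factor is at least a constant times `ψ^{λ-1} ≥ ψ^{-1/2}` (as `λ ≤ 1/2`), so the integrand dominates
`c / ψ` there and `p_β(β) ≥ c log (1 / β²) → ∞`. The lower bound is only meaningful because the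
integral converges for `β ≠ 0` (otherwise the Bochner integral is `0`): there
`e^{-β²/(2ψ)} ≤ 2ψ / β²` leaves a Gamma-type integrand `ψ^{λ-1/2} e^{-ψ/(2γ²)}`.
-/

open MeasureTheory Real Filter Set

namespace NormalGamma

variable {lam γ β ψ : ℝ}

noncomputable def integrand (lam γ β ψ : ℝ) : ℝ :=
  (2 * π * ψ) ^ (-(1 : ℝ) / 2) * exp (-β ^ 2 / (2 * ψ)) *
    ((1 / (2 * γ ^ 2)) ^ lam / Gamma lam * ψ ^ (lam - 1) * exp (-ψ / (2 * γ ^ 2)))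

noncomputable def normConst (lam γ : ℝ) : ℝ :=
  (2 * π) ^ (-(1 : ℝ) / 2) * ((1 / (2 * γ ^ 2)) ^ lam / Gamma lam)

lemma normConst_pos (hlam : 0 < lam) (hγ : γ ≠ 0) : 0 < normConst lam γ := by
  have := Gamma_pos_of_pos hlam
  unfold normConst
  positivity

lemma integrand_eq_normConst_mul (hψ : 0 < ψ) :
    integrand lam γ β ψ =
      normConst lam γ * (ψ ^ (lam - 3 / 2) * exp (-β ^ 2 / (2 * ψ)) * exp (-ψ / (2 * γ ^ 2))) := by
  have hpow : ψ ^ (lam - 3 / 2) = ψ ^ (-(1 : ℝ) / 2) * ψ ^ (lam - 1) := by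
    rw [← rpow_add hψ]; ring_nf
  rw [integrand, normConst, mul_rpow (by positivity) hψ.le, hpow]
  ring

lemma integrand_nonneg (hlam : 0 < lam) (hψ : 0 < ψ) : 0 ≤ integrand lam γ β ψ := by
  have := Gamma_pos_of_pos hlam
  unfold integrand
  positivity

lemma measurable_integrand : Measurable (integrand lam γ β) := by
  unfold integrand
  fun_prop

lemma rpow_mul_exp_neg_sq_div_le (a : ℝ) (hβ : β ≠ 0) (hψ : 0 < ψ) :
    ψ ^ a * exp (-β ^ 2 / (2 * ψ)) ≤ 2 / β ^ 2 * ψ ^ (a + 1) := by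
  have hy : 0 < β ^ 2 / (2 * ψ) := by positivity
  have hexp : exp (-β ^ 2 / (2 * ψ)) ≤ (β ^ 2 / (2 * ψ))⁻¹ := by
    rw [neg_div, exp_neg]
    exact inv_anti₀ hy (by linarith [add_one_le_exp (β ^ 2 / (2 * ψ))])
  calc ψ ^ a * exp (-β ^ 2 / (2 * ψ)) ≤ ψ ^ a * (β ^ 2 / (2 * ψ))⁻¹ := by gcongr
    _ = 2 / β ^ 2 * ψ ^ (a + 1) := by rw [rpow_add_one hψ.ne']; field_simp

lemma inv_le_rpow_mul_exp_neg_sq_div {a : ℝ} (ha : a ≤ -1) (hβψ : β ^ 2 ≤ ψ) (hψ0 : 0 < ψ)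
    (hψ1 : ψ ≤ 1) : exp (-(1 / 2)) * ψ⁻¹ ≤ ψ ^ a * exp (-β ^ 2 / (2 * ψ)) := by
  rw [mul_comm]
  gcongr
  · rw [← rpow_neg_one]
    exact rpow_le_rpow_of_exponent_ge hψ0 hψ1 ha
  · rw [neg_div, neg_le_neg_iff, div_le_iff₀ (by positivity)]
    linarith

lemma integrableOn_integrand (hlam : 0 < lam) (hγ : γ ≠ 0) (hβ : β ≠ 0) :
    IntegrableOn (integrand lam γ β) (Ioi 0) := by
  have hb : 0 < 1 / (2 * γ ^ 2) := by positivity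
  have hdom : IntegrableOn (fun ψ : ℝ => ψ ^ (lam - 1 / 2) * exp (-(1 / (2 * γ ^ 2)) * ψ))
      (Ioi 0) := by
    simpa using integrableOn_rpow_mul_exp_neg_mul_rpow (p := 1) (by linarith) one_pos hb
  refine (hdom.const_mul (normConst lam γ * (2 / β ^ 2))).mono'
    measurable_integrand.aestronglyMeasurable ?_
  filter_upwards [self_mem_ae_restrict measurableSet_Ioi] with ψ (hψ : 0 < ψ)
  rw [norm_of_nonneg (integrand_nonneg hlam hψ), integrand_eq_normConst_mul hψ]
  have := rpow_mul_exp_neg_sq_div_le (lam - 3 / 2) hβ hψ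
  have := (normConst_pos hlam hγ).le
  calc normConst lam γ * (ψ ^ (lam - 3 / 2) * exp (-β ^ 2 / (2 * ψ)) * exp (-ψ / (2 * γ ^ 2)))
      ≤ normConst lam γ * (2 / β ^ 2 * ψ ^ (lam - 3 / 2 + 1) * exp (-ψ / (2 * γ ^ 2))) := by
        gcongr
    _ = _ := by ring_nf

lemma mul_log_inv_le_setIntegral_Ioi {f : ℝ → ℝ} {c t : ℝ} (ht : 0 < t) (ht1 : t ≤ 1)
    (hf : IntegrableOn f (Ioi 0)) (hf0 : ∀ ψ ∈ Ioi (0 : ℝ), 0 ≤ f ψ)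
    (hcf : ∀ ψ ∈ Ioc t 1, c * ψ⁻¹ ≤ f ψ) :
    c * log t⁻¹ ≤ ∫ ψ in Ioi 0, f ψ := by
  have hsub : Ioc t 1 ⊆ Ioi 0 := fun ψ hψ => ht.trans hψ.1
  have hinv : IntegrableOn (fun ψ : ℝ => c * ψ⁻¹) (Ioc t 1) :=
    ((continuousOn_const.mul (continuousOn_inv₀.mono fun ψ hψ => (ht.trans_le hψ.1).ne'))
      |>.integrableOn_Icc).mono_set Ioc_subset_Icc_self
  calc c * log t⁻¹ = ∫ ψ in Ioc t 1, c * ψ⁻¹ := by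
        rw [integral_const_mul, ← intervalIntegral.integral_of_le ht1,
          integral_inv_of_pos ht one_pos, one_div]
    _ ≤ ∫ ψ in Ioc t 1, f ψ := setIntegral_mono_on hinv (hf.mono_set hsub) measurableSet_Ioc hcf
    _ ≤ ∫ ψ in Ioi 0, f ψ :=
        setIntegral_mono_set hf (ae_restrict_of_forall_mem measurableSet_Ioi hf0) hsub.eventuallyLE

lemma mul_log_inv_sq_le_integral (hlam0 : 0 < lam) (hlam : lam ≤ 1 / 2) (hγ : γ ≠ 0)
    (hβ : β ≠ 0) (hβ1 : β ^ 2 ≤ 1) :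
    normConst lam γ * exp (-(1 / 2)) * exp (-1 / (2 * γ ^ 2)) * log (β ^ 2)⁻¹ ≤
      ∫ ψ in Ioi 0, integrand lam γ β ψ := by
  refine mul_log_inv_le_setIntegral_Ioi (by positivity) hβ1 (integrableOn_integrand hlam0 hγ hβ)
    (fun ψ hψ => integrand_nonneg hlam0 hψ) fun ψ ⟨hβψ, hψ1⟩ => ?_
  have hψ0 : 0 < ψ := (sq_pos_of_ne_zero hβ).trans hβψ
  have := (normConst_pos hlam0 hγ).le
  calc normConst lam γ * exp (-(1 / 2)) * exp (-1 / (2 * γ ^ 2)) * ψ⁻¹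
      = normConst lam γ * (exp (-(1 / 2)) * ψ⁻¹) * exp (-1 / (2 * γ ^ 2)) := by ring
    _ ≤ normConst lam γ * (ψ ^ (lam - 3 / 2) * exp (-β ^ 2 / (2 * ψ))) *
          exp (-ψ / (2 * γ ^ 2)) := by
        gcongr _ * ?_ * ?_
        · exact inv_le_rpow_mul_exp_neg_sq_div (by linarith) hβψ.le hψ0 hψ1
        · gcongr
    _ = integrand lam γ β ψ := by rw [integrand_eq_normConst_mul hψ0]; ring

end NormalGamma

open NormalGamma in
/-- The Normal-Gamma marginal density with shape 0 < λ ≤ 1/2 is unbounded at the origin: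
p_β(β) → ∞ as β → 0 (β ≠ 0). -/
theorem normalGamma_density_unbounded_at_origin (lam γ : ℝ)
    (hlam0 : 0 < lam) (hlam : lam ≤ 1 / 2) (hγ : 0 < γ) :
    Tendsto (fun β : ℝ =>
        ∫ ψ in Set.Ioi (0 : ℝ),
          (2 * π * ψ) ^ (-(1 : ℝ) / 2) * exp (-β ^ 2 / (2 * ψ)) *
            ((1 / (2 * γ ^ 2)) ^ lam / Gamma lam * ψ ^ (lam - 1) * exp (-ψ / (2 * γ ^ 2))))
      (nhdsWithin 0 {0}ᶜ) atTop := by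
  set c := normConst lam γ * exp (-(1 / 2)) * exp (-1 / (2 * γ ^ 2))
  have hc : 0 < c := by have := normConst_pos hlam0 hγ.ne'; positivity
  have hlog : Tendsto (fun β : ℝ => c * log (β ^ 2)⁻¹) (nhdsWithin 0 {0}ᶜ) atTop := by
    refine (tendsto_neg_atBot_atTop.comp
      (tendsto_log_nhdsNE_zero.const_mul_atBot two_pos)).const_mul_atTop hc |>.congr fun β => ?_
    simp [log_inv, log_pow]
  have hsmall : ∀ᶠ β : ℝ in nhdsWithin 0 {0}ᶜ, β ^ 2 ≤ 1 :=
    nhdsWithin_le_nhds <| ((continuous_pow 2).tendsto' 0 0 (by simp)).eventually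
      (eventually_le_nhds one_pos)
  refine tendsto_atTop_mono' _ ?_ hlog
  filter_upwards [self_mem_nhdsWithin, hsmall] with β hβ hβ1
  exact mul_log_inv_sq_le_integral hlam0 hlam hγ.ne' hβ hβ1
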